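/- Let G = (V,E) be a finite simple graph with no isolated vertices, and let G' be obtained from G by subdividing a single edge e = {u,v} of G with one new internal vertex w (i.e., deleting e and adding the two edges {u,w} and {w,v} through a new vertex w). Then a(G') ≤ a(G). -/

import Mathlib

open Matrix

/-- The `k`-th smallest eigenvalue (1-indexed, with multiplicity) of a real symmetric
matrix; junk value `0` if the matrix is not symmetric or `k` is out of range. -/
noncomputable def eigval {n : Type} [Fintype n] (A : Matrix n n ℝ) (k : ℕ) : ℝ := by
  classical
  exact if hA : A.IsHermitian then
    (Multiset.sort (Finset.univ.val.map hA.eigenvalues) (· ≤ ·)).getD (k - 1) 0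
  else 0

/-- The normalized direction `d_{uv}` from `p v` to `p u`; zero if `p u = p v`. -/
noncomputable def dvec {d : ℕ} {V : Type} (p : V → EuclideanSpace ℝ (Fin d)) (u v : V) :
    EuclideanSpace ℝ (Fin d) :=
  ‖p u - p v‖⁻¹ • (p u - p v)

/-- The (normalized) rigidity matrix `R(G,p)`: the column of an edge `{u,v}` is
`(1_u - 1_v) ⊗ d_{uv}`; columns indexed by non-edges are zero. -/
noncomputable def rigidityMatrix (d : ℕ) {V : Type} [Fintype V]
    (G : SimpleGraph V) (p : V → EuclideanSpace ℝ (Fin d)) :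
    Matrix (V × Fin d) (Sym2 V) ℝ := by
  classical
  exact fun vi e =>
    if e ∈ G.edgeSet then
      Sym2.lift ⟨fun u w =>
        (if vi.1 = u then dvec p u w vi.2 else 0) +
        (if vi.1 = w then dvec p w u vi.2 else 0),
        fun u w => add_comm _ _⟩ e
    else 0

/-- The stiffness matrix `L(G,p) = R(G,p) R(G,p)ᵀ`. -/
noncomputable def stiffnessMatrix (d : ℕ) {V : Type} [Fintype V]
    (G : SimpleGraph V) (p : V → EuclideanSpace ℝ (Fin d)) :
    Matrix (V × Fin d) (V × Fin d) ℝ :=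
  rigidityMatrix d G p * (rigidityMatrix d G p)ᵀ

/-- The `d`-dimensional algebraic connectivity
`a_d(G) = sup { λ_{C(d+1,2)+1}(L(G,p)) : p : V → ℝ^d }`. -/
noncomputable def algConnD (d : ℕ) {V : Type} [Fintype V] (G : SimpleGraph V) : ℝ :=
  sSup { x : ℝ | ∃ p : V → EuclideanSpace ℝ (Fin d),
    x = eigval (stiffnessMatrix d G p) (Nat.choose (d + 1) 2 + 1) }

/-- The algebraic connectivity `a(G) = λ₂(L(G))`. -/
noncomputable def algConn {V : Type} [Fintype V] (G : SimpleGraph V) : ℝ := by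
  classical
  exact eigval (G.lapMatrix ℝ) 2

/-- A graph is `d`-rigid if `rank R(G,p) = d|V| - C(d+1,2)` for some `p`. -/
noncomputable def IsRigid (d : ℕ) {V : Type} [Fintype V] (G : SimpleGraph V) : Prop :=
  ∃ p : V → EuclideanSpace ℝ (Fin d),
    (rigidityMatrix d G p).rank = d * Fintype.card V - Nat.choose (d + 1) 2

/-- A graph is minimally `d`-rigid if it is `d`-rigid but deleting any edge destroys rigidity. -/
noncomputable def IsMinRigid (d : ℕ) {V : Type} [Fintype V] (G : SimpleGraph V) : Prop :=
  IsRigid d G ∧ ∀ e ∈ G.edgeSet, ¬ IsRigid d (G.deleteEdges {e})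

/-- The bipartite subgraph `G(A,B)` of `G` between disjoint vertex sets `A` and `B`. -/
def betweenSubgraph {V : Type} [DecidableEq V] (G : SimpleGraph V) (A B : Finset V) :
    SimpleGraph ↥(A ∪ B) where
  Adj x y := G.Adj ↑x ↑y ∧ ((↑x ∈ A ∧ ↑y ∈ B) ∨ (↑x ∈ B ∧ ↑y ∈ A))
  symm := by
    constructor
    rintro x y ⟨h1, h2⟩
    exact ⟨h1.symm, by tauto⟩
  loopless := by
    constructor
    rintro x ⟨h1, -⟩
    exact G.irrefl h1

/-- The graph obtained from `G` by subdividing the edge `{u,v}` with one new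
internal vertex (the unique vertex of the `Unit` summand): the edge `{u,v}` is
deleted and the new vertex is joined to both `u` and `v`. -/
def subdivideOne {V : Type} (G : SimpleGraph V) (u v : V) : SimpleGraph (V ⊕ Unit) :=
  SimpleGraph.fromRel fun x y =>
    match x, y with
    | .inl a, .inl b => G.Adj a b ∧ s(a, b) ≠ s(u, v)
    | .inl a, .inr _ => a = u ∨ a = v
    | _, _ => False


section AuxSpectral

variable {n : Type} [Fintype n]

lemma aux_inner_eq_dot (x y : EuclideanSpace ℝ n) :
    (inner ℝ x y : ℝ) = (x : n → ℝ) ⬝ᵥ (y : n → ℝ) := by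
  simp [PiLp.inner_apply, dotProduct, mul_comm]

lemma aux_dot_self_nonneg (x : n → ℝ) : 0 ≤ x ⬝ᵥ x :=
  Finset.sum_nonneg fun i _ => mul_self_nonneg _

lemma aux_psd_dot {A : Matrix n n ℝ} (hA : Matrix.PosSemidef A) (x : n → ℝ) :
    0 ≤ x ⬝ᵥ (A *ᵥ x) := by
  have := hA.dotProduct_mulVec_nonneg x
  simpa using this

lemma aux_herm_inner {A : Matrix n n ℝ} [DecidableEq n] (hH : A.IsHermitian) (i : n) (y : n → ℝ) :
    ((hH.eigenvectorBasis i : n → ℝ) ⬝ᵥ (A *ᵥ y)) =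
      hH.eigenvalues i * ((hH.eigenvectorBasis i : n → ℝ) ⬝ᵥ y) := by
  rw [Matrix.dotProduct_mulVec, ← Matrix.mulVec_transpose]
  have ht : Aᵀ = A := by
    have h2 := hH
    rwa [Matrix.IsHermitian, Matrix.conjTranspose_eq_transpose_of_trivial] at h2
  have key : A *ᵥ (hH.eigenvectorBasis i : n → ℝ)
      = hH.eigenvalues i • (hH.eigenvectorBasis i : n → ℝ) := hH.mulVec_eigenvectorBasis i
  rw [ht, key, smul_dotProduct, smul_eq_mul]

lemma aux_dot_eq_sum (b : OrthonormalBasis n ℝ (EuclideanSpace ℝ n)) (x y : n → ℝ) :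
    x ⬝ᵥ y = ∑ i, ((b i : n → ℝ) ⬝ᵥ x) * ((b i : n → ℝ) ⬝ᵥ y) := by
  set x' : EuclideanSpace ℝ n := WithLp.toLp 2 x with hx'
  set y' : EuclideanSpace ℝ n := WithLp.toLp 2 y with hy'
  have h := b.sum_inner_mul_inner x' y'
  have h1 : (inner ℝ x' y' : ℝ) = x ⬝ᵥ y := aux_inner_eq_dot _ _
  rw [← h] at h1
  rw [← h1]
  refine Finset.sum_congr rfl fun i _ => ?_
  have h2 : (inner ℝ x' (b i) : ℝ) = (b i : n → ℝ) ⬝ᵥ x := by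
    rw [real_inner_comm]; exact aux_inner_eq_dot _ _
  rw [h2, aux_inner_eq_dot]

lemma aux_eq_zero_of_coords (b : OrthonormalBasis n ℝ (EuclideanSpace ℝ n)) {w : n → ℝ}
    (h : ∀ i, (b i : n → ℝ) ⬝ᵥ w = 0) : w = 0 := by
  have hd := aux_dot_eq_sum b w w
  simp only [h, zero_mul, Finset.sum_const_zero] at hd
  exact (dotProduct_self_eq_zero).mp hd

lemma aux_eigval_nonneg {A : Matrix n n ℝ} (hA : A.PosSemidef) (k : ℕ) : 0 ≤ eigval A k := by
  classical
  unfold eigval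
  rw [dif_pos hA.1]
  set l := Multiset.sort (Finset.univ.val.map hA.1.eigenvalues) (· ≤ ·) with hl
  by_cases h : k - 1 < l.length
  · rw [List.getD_eq_getElem l 0 h]
    have hmem : l[k-1] ∈ l := List.getElem_mem h
    rw [Multiset.mem_sort] at hmem
    obtain ⟨i, _, hi⟩ := Multiset.mem_map.mp hmem
    rw [← hi]
    exact hA.eigenvalues_nonneg i
  · rw [List.getD_eq_default l 0 (not_lt.mp h)]

lemma aux_rayleigh_two {A : Matrix n n ℝ} (hA : A.PosSemidef)
    {w x : n → ℝ} (hw : A *ᵥ w = 0) (hw0 : w ≠ 0) (hwx : w ⬝ᵥ x = 0) :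
    eigval A 2 * (x ⬝ᵥ x) ≤ x ⬝ᵥ (A *ᵥ x) := by
  classical
  rcases le_or_gt (eigval A 2) 0 with h0 | hpos
  · have h1 : 0 ≤ x ⬝ᵥ (A *ᵥ x) := aux_psd_dot hA x
    have h2 : 0 ≤ x ⬝ᵥ x := aux_dot_self_nonneg x
    nlinarith
  · have hH := hA.1
    unfold eigval at hpos ⊢
    rw [dif_pos hH] at hpos ⊢
    set l := Multiset.sort (Finset.univ.val.map hH.eigenvalues) (· ≤ ·) with hldef
    have hsorted : l.Pairwise (· ≤ ·) := Multiset.pairwise_sort _ _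
    have hlm : (l : Multiset ℝ) = Finset.univ.val.map hH.eigenvalues := Multiset.sort_eq _ _
    have hlen : 1 < l.length := by
      by_contra hcon
      rw [List.getD_eq_default l 0 (not_lt.mp hcon)] at hpos
      exact lt_irrefl _ hpos
    set μ := l.getD 1 0 with hμdef
    set b := hH.eigenvectorBasis with hbdef
    set lam := hH.eigenvalues with hlamdef
    set d : n → ℝ := fun i => (b i : n → ℝ) ⬝ᵥ w with hd
    set c : n → ℝ := fun i => (b i : n → ℝ) ⬝ᵥ x with hc
    have hcount : (Finset.univ.filter (fun i => lam i < μ)).card ≤ 1 := by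
      have e1 : (Finset.univ.filter (fun i => lam i < μ)).card
          = Multiset.countP (fun z => z < μ) (Finset.univ.val.map lam) := by
        rw [Multiset.countP_map]
        rfl
      rw [e1, ← hlm, Multiset.coe_countP]
      clear_value l
      clear hlm hldef hpos
      rcases l with _ | ⟨a, _ | ⟨e, t⟩⟩
      · simp at hlen
      · simp at hlen
      · have hμe : μ = e := by rw [hμdef]; rfl
        rw [List.pairwise_cons] at hsorted
        have hst := hsorted.2
        rw [List.pairwise_cons] at hst
        have het : ∀ z ∈ t, ¬ z < μ := fun z hz => not_lt.mpr (hμe ▸ hst.1 z hz)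
        rw [List.countP_cons, List.countP_cons]
        have ht0 : List.countP (fun z => decide (z < μ)) t = 0 := by
          rw [List.countP_eq_zero]
          intro z hz
          simpa using het z hz
        have he0 : ¬ e < μ := by rw [hμe]; exact lt_irrefl e
        simp [ht0, he0]
        split <;> simp
    have hld : ∀ i, lam i * d i = 0 := by
      intro i
      have h := aux_herm_inner hH i w
      rw [hw] at h
      simpa [hd, hbdef, hlamdef] using h.symm
    obtain ⟨i₀, hi₀⟩ : ∃ i, d i ≠ 0 := by
      by_contra hcon
      push_neg at hcon
      exact hw0 (aux_eq_zero_of_coords b hcon)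
    have hlami₀ : lam i₀ = 0 := by
      rcases mul_eq_zero.mp (hld i₀) with h | h
      · exact h
      · exact absurd h hi₀
    have hi₀lt : lam i₀ < μ := by rw [hlami₀]; exact hpos
    have hunique : ∀ j, lam j < μ → j = i₀ := by
      intro j hj
      by_contra hnej
      have hsub : ({j, i₀} : Finset n) ⊆ Finset.univ.filter (fun i => lam i < μ) := by
        intro z hz
        simp only [Finset.mem_insert, Finset.mem_singleton] at hz
        rcases hz with rfl | rfl <;> simp [hj, hi₀lt]
      have := Finset.card_le_card hsub
      rw [Finset.card_pair hnej] at this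
      omega
    have hdj : ∀ j, j ≠ i₀ → d j = 0 := by
      intro j hj
      rcases mul_eq_zero.mp (hld j) with h | h
      · exact absurd (hunique j (h ▸ hpos)) hj
      · exact h
    have hc0 : c i₀ = 0 := by
      have hwx2 := aux_dot_eq_sum b w x
      rw [hwx] at hwx2
      have hsum : ∑ i, d i * c i = d i₀ * c i₀ :=
        Finset.sum_eq_single i₀ (fun j _ hj => by rw [hdj j hj, zero_mul]) (by simp)
      rw [show (∑ i, ((b i : n → ℝ) ⬝ᵥ w) * ((b i : n → ℝ) ⬝ᵥ x)) = ∑ i, d i * c i from rfl,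
        hsum] at hwx2
      rcases mul_eq_zero.mp hwx2.symm with h | h
      · exact absurd h hi₀
      · exact h
    have hAx : x ⬝ᵥ (A *ᵥ x) = ∑ i, lam i * (c i)^2 := by
      rw [aux_dot_eq_sum b x (A *ᵥ x)]
      refine Finset.sum_congr rfl fun i _ => ?_
      rw [aux_herm_inner hH i x]
      show c i * (lam i * c i) = lam i * (c i)^2
      ring
    have hxx : x ⬝ᵥ x = ∑ i, (c i)^2 := by
      rw [aux_dot_eq_sum b x x]
      exact Finset.sum_congr rfl fun i _ => (sq (c i)).symm
    rw [hAx, hxx, Finset.mul_sum]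
    refine Finset.sum_le_sum fun i _ => ?_
    by_cases hi : i = i₀
    · subst hi
      rw [hc0]
      simp
    · have hge : μ ≤ lam i := not_lt.mp fun hcon => hi (hunique i hcon)
      exact mul_le_mul_of_nonneg_right hge (sq_nonneg _)

lemma aux_exists_eigvec {A : Matrix n n ℝ} (hH : A.IsHermitian) (hcard : 2 ≤ Fintype.card n) :
    ∃ g : n → ℝ, A *ᵥ g = eigval A 2 • g ∧ g ⬝ᵥ g = 1 := by
  classical
  unfold eigval
  rw [dif_pos hH]
  set l := Multiset.sort (Finset.univ.val.map hH.eigenvalues) (· ≤ ·) with hldef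
  have hlm : (l : Multiset ℝ) = Finset.univ.val.map hH.eigenvalues := Multiset.sort_eq _ _
  have hlen : 1 < l.length := by
    have : l.length = Fintype.card n := by
      rw [← Multiset.coe_card, hlm, Multiset.card_map]
      rfl
    omega
  rw [List.getD_eq_getElem l 0 hlen]
  have hmem : l[1] ∈ (l : Multiset ℝ) := List.getElem_mem hlen
  rw [hlm] at hmem
  obtain ⟨i, -, hi⟩ := Multiset.mem_map.mp hmem
  refine ⟨(hH.eigenvectorBasis i : n → ℝ), ?_, ?_⟩
  · have key : A *ᵥ (hH.eigenvectorBasis i : n → ℝ)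
        = hH.eigenvalues i • (hH.eigenvectorBasis i : n → ℝ) := hH.mulVec_eigenvectorBasis i
    rw [key, hi]
  · have h1 : (inner ℝ (hH.eigenvectorBasis i) (hH.eigenvectorBasis i) : ℝ) = 1 := by
      rw [real_inner_self_eq_norm_sq, hH.eigenvectorBasis.orthonormal.1 i]
      norm_num
    rw [← aux_inner_eq_dot]
    exact h1

lemma aux_exists_nonconst_ker {A : Matrix n n ℝ} (hA : A.PosSemidef) (hcard : 2 ≤ Fintype.card n)
    (h2 : eigval A 2 = 0) : ∃ g : n → ℝ, A *ᵥ g = 0 ∧ ¬ ∃ c : ℝ, g = fun _ => c := by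
  classical
  have hH := hA.1
  unfold eigval at h2
  rw [dif_pos hH] at h2
  set l := Multiset.sort (Finset.univ.val.map hH.eigenvalues) (· ≤ ·) with hldef
  have hsorted : l.Pairwise (· ≤ ·) := Multiset.pairwise_sort _ _
  have hlm : (l : Multiset ℝ) = Finset.univ.val.map hH.eigenvalues := Multiset.sort_eq _ _
  have hlen : 1 < l.length := by
    have : l.length = Fintype.card n := by
      rw [← Multiset.coe_card, hlm, Multiset.card_map]
      rfl
    omega
  set lam := hH.eigenvalues with hlamdef
  set b := hH.eigenvectorBasis with hbdef
  have hnneg : ∀ z ∈ l, 0 ≤ z := by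
    intro z hz
    have : z ∈ (l : Multiset ℝ) := hz
    rw [hlm] at this
    obtain ⟨i, -, hi⟩ := Multiset.mem_map.mp this
    rw [← hi]
    exact hA.eigenvalues_nonneg i
  have hcount : 2 ≤ (Finset.univ.filter (fun i => lam i = 0)).card := by
    have e1 : (Finset.univ.filter (fun i => lam i = 0)).card
        = Multiset.countP (fun z => z = 0) (Finset.univ.val.map lam) := by
      rw [Multiset.countP_map]
      rfl
    rw [e1, ← hlm, Multiset.coe_countP]
    clear_value l
    clear hlm hldef
    rcases l with _ | ⟨a, _ | ⟨e, t⟩⟩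
    · simp at hlen
    · simp at hlen
    · have he0 : e = 0 := by
        have he : (a :: e :: t).getD 1 0 = e := rfl
        rw [he] at h2
        exact h2
      have ha0 : a = 0 := by
        rw [List.pairwise_cons] at hsorted
        have h1 : a ≤ e := hsorted.1 e (by simp)
        have h2' : 0 ≤ a := hnneg a (by simp)
        rw [he0] at h1
        linarith
      rw [List.countP_cons, List.countP_cons]
      simp [ha0, he0]
  obtain ⟨i, hi, j, hj, hij⟩ := Finset.one_lt_card.mp
    (by omega : 1 < (Finset.univ.filter (fun i => lam i = 0)).card)
  rw [Finset.mem_filter] at hi hj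
  have hki : A *ᵥ (b i : n → ℝ) = 0 := by
    have key : A *ᵥ (b i : n → ℝ) = lam i • (b i : n → ℝ) := hH.mulVec_eigenvectorBasis i
    rw [key, hi.2, zero_smul]
  have hkj : A *ᵥ (b j : n → ℝ) = 0 := by
    have key : A *ᵥ (b j : n → ℝ) = lam j • (b j : n → ℝ) := hH.mulVec_eigenvectorBasis j
    rw [key, hj.2, zero_smul]
  have horth : (inner ℝ (b i) (b j) : ℝ) = 0 := b.orthonormal.2 hij
  have hni : (inner ℝ (b i) (b i) : ℝ) = 1 := by
    rw [real_inner_self_eq_norm_sq, b.orthonormal.1 i]; norm_num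
  have hnj : (inner ℝ (b j) (b j) : ℝ) = 1 := by
    rw [real_inner_self_eq_norm_sq, b.orthonormal.1 j]; norm_num
  by_cases hci : ∃ c : ℝ, (b i : n → ℝ) = fun _ => c
  · refine ⟨(b j : n → ℝ), hkj, ?_⟩
    rintro ⟨c', hc'⟩
    obtain ⟨c, hc⟩ := hci
    have hN : (0 : ℝ) < (Fintype.card n : ℝ) := by
      have : 0 < Fintype.card n := by omega
      exact_mod_cast this
    have e1 : (Fintype.card n : ℝ) * (c * c') = 0 := by
      rw [aux_inner_eq_dot, hc, hc'] at horth
      simpa [dotProduct, Finset.sum_const, nsmul_eq_mul, Finset.card_univ] using horth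
    have e2 : (Fintype.card n : ℝ) * (c * c) = 1 := by
      rw [aux_inner_eq_dot, hc] at hni
      simpa [dotProduct, Finset.sum_const, nsmul_eq_mul, Finset.card_univ] using hni
    have e3 : (Fintype.card n : ℝ) * (c' * c') = 1 := by
      rw [aux_inner_eq_dot, hc'] at hnj
      simpa [dotProduct, Finset.sum_const, nsmul_eq_mul, Finset.card_univ] using hnj
    nlinarith [e1, e2, e3]
  · exact ⟨(b i : n → ℝ), hki, hci⟩

end AuxSpectral

lemma aux_lapMatrix_irrel {V : Type} [Fintype V] (G : SimpleGraph V)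
    (h1 h1' : DecidableEq V) (h2 h2' : DecidableRel G.Adj) :
    @SimpleGraph.lapMatrix V ℝ _ G h2 h1 _ = @SimpleGraph.lapMatrix V ℝ _ G h2' h1' _ := by
  have e1 : h1 = h1' := Subsingleton.elim _ _
  have e2 : h2 = h2' := Subsingleton.elim _ _
  subst e1
  subst e2
  rfl

lemma aux_algConn_eq {V : Type} [Fintype V] (G : SimpleGraph V) [h1 : DecidableEq V]
    [h2 : DecidableRel G.Adj] : algConn G = eigval (G.lapMatrix ℝ) 2 := by
  unfold algConn
  congr 1
  exact aux_lapMatrix_irrel G _ _ _ _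

section AuxGraph

variable {V : Type} (G : SimpleGraph V) (u v : V)

lemma aux_adj_ll (a b : V) : (subdivideOne G u v).Adj (Sum.inl a) (Sum.inl b) ↔
    (G.Adj a b ∧ s(a, b) ≠ s(u, v)) := by
  simp only [subdivideOne, SimpleGraph.fromRel_adj]
  constructor
  · rintro ⟨hne', h | h⟩
    · exact h
    · exact ⟨h.1.symm, by rw [Sym2.eq_swap]; exact h.2⟩
  · rintro ⟨h1, h2⟩
    exact ⟨by simp [h1.ne], Or.inl ⟨h1, h2⟩⟩

lemma aux_adj_lr (a : V) (t : Unit) : (subdivideOne G u v).Adj (Sum.inl a) (Sum.inr t) ↔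
    (a = u ∨ a = v) := by
  simp only [subdivideOne, SimpleGraph.fromRel_adj]
  constructor
  · rintro ⟨hne', h | h⟩
    · exact h
    · exact absurd h not_false
  · intro h
    exact ⟨by simp, Or.inl h⟩

lemma aux_adj_rl (a : V) (t : Unit) : (subdivideOne G u v).Adj (Sum.inr t) (Sum.inl a) ↔
    (a = u ∨ a = v) := by
  rw [SimpleGraph.adj_comm]
  exact aux_adj_lr G u v a t

lemma aux_adj_rr (t t' : Unit) : ¬ (subdivideOne G u v).Adj (Sum.inr t) (Sum.inr t') := by
  simp only [subdivideOne, SimpleGraph.fromRel_adj]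
  rintro ⟨hne', h | h⟩ <;> exact h

lemma aux_quad_form {W : Type} [Fintype W] [DecidableEq W] (H : SimpleGraph W)
    [DecidableRel H.Adj] (x : W → ℝ) :
    x ⬝ᵥ (H.lapMatrix ℝ *ᵥ x) = (∑ i, ∑ j, if H.Adj i j then (x i - x j)^2 else 0) / 2 := by
  rw [← Matrix.toLinearMap₂'_apply', SimpleGraph.lapMatrix_toLinearMap₂']

lemma aux_quad_center {W : Type} [Fintype W] [DecidableEq W] (H : SimpleGraph W)
    [DecidableRel H.Adj] (y : W → ℝ) (c : ℝ) :
    (fun p => y p - c) ⬝ᵥ (H.lapMatrix ℝ *ᵥ (fun p => y p - c)) = y ⬝ᵥ (H.lapMatrix ℝ *ᵥ y) := by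
  rw [aux_quad_form, aux_quad_form]
  simp only [sub_sub_sub_cancel_right]

lemma aux_collapse2 [Fintype V] [DecidableEq V] (p q : V) (F : V → V → ℝ) :
    ∑ a, ∑ b, (if a = p ∧ b = q then F a b else 0) = F p q := by
  have h1 : ∀ a : V, (∑ b, if a = p ∧ b = q then F a b else 0) = if a = p then F a q else 0 := by
    intro a
    by_cases h : a = p
    · subst h
      simp
    · simp [h]
  rw [Finset.sum_congr rfl (fun a _ => h1 a)]
  simp

lemma aux_quad_subdiv [Fintype V] [DecidableEq V] [DecidableRel G.Adj]
    [DecidableRel (subdivideOne G u v).Adj] (hne : u ≠ v) (huv : G.Adj u v) (g : V → ℝ) :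
    (Sum.elim g (fun _ : Unit => g u)) ⬝ᵥ ((subdivideOne G u v).lapMatrix ℝ *ᵥ (Sum.elim g (fun _ : Unit => g u)))
      = g ⬝ᵥ (G.lapMatrix ℝ *ᵥ g) := by
  rw [aux_quad_form, aux_quad_form]
  congr 1
  have key1 : ∀ a b : V, (if G.Adj a b then (g a - g b)^2 else 0)
      = (if G.Adj a b ∧ s(a,b) ≠ s(u,v) then (g a - g b)^2 else 0)
        + ((if a = u ∧ b = v then (g a - g b)^2 else 0)
          + (if a = v ∧ b = u then (g a - g b)^2 else 0)) := by
    intro a b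
    by_cases h1 : G.Adj a b
    · by_cases h2 : s(a,b) = s(u,v)
      · rw [Sym2.eq_iff] at h2
        rcases h2 with ⟨rfl, rfl⟩ | ⟨rfl, rfl⟩
        · simp [h1, hne, hne.symm]
        · simp [h1, hne, hne.symm]
      · have h2' : ¬(a = u ∧ b = v) := by
          rintro ⟨rfl, rfl⟩; exact h2 rfl
        have h2'' : ¬(a = v ∧ b = u) := by
          rintro ⟨rfl, rfl⟩; exact h2 (Sym2.eq_swap)
        simp [h1, h2, h2', h2'']
    · have h2' : ¬(a = u ∧ b = v) := by
        rintro ⟨rfl, rfl⟩; exact h1 huv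
      have h2'' : ¬(a = v ∧ b = u) := by
        rintro ⟨rfl, rfl⟩; exact h1 huv.symm
      simp [h1, h2', h2'']
  rw [Fintype.sum_sum_type]
  simp only [Fintype.sum_sum_type]
  simp only [Sum.elim_inl, Sum.elim_inr, aux_adj_ll, aux_adj_lr, aux_adj_rl]
  have hrr : ∀ (t t' : Unit), (if (subdivideOne G u v).Adj (Sum.inr t) (Sum.inr t') then
      ((fun _ => g u) t - (fun _ => g u) t' : ℝ)^2 else 0) = 0 := by
    intro t t'
    rw [if_neg (aux_adj_rr G u v t t')]
  have hsplit_or : ∀ (a : V) (X : ℝ), (if a = u ∨ a = v then X else 0)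
      = (if a = u then X else 0) + (if a = v then X else 0) := by
    intro a X
    by_cases h1 : a = u
    · subst h1
      simp [hne]
    · by_cases h2 : a = v <;> simp [h1, h2, hne.symm]
  rw [Finset.sum_congr rfl (fun a _ => Finset.sum_congr rfl (fun b _ => key1 a b))]
  simp only [Finset.sum_add_distrib]
  rw [aux_collapse2 u v, aux_collapse2 v u]
  simp only [Finset.univ_unique, Finset.sum_singleton, hrr]
  simp only [hsplit_or, Finset.sum_add_distrib, Finset.sum_ite_eq' Finset.univ,
    Finset.mem_univ, if_pos]
  ring

end AuxGraph

/-- **Monotonicity of algebraic connectivity under edge subdivision** (Lemma 4.6). -/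
theorem subdivision_monotone {V : Type} [Fintype V] (G : SimpleGraph V)
    [DecidableRel G.Adj] (hiso : ∀ x, 0 < G.degree x) (u v : V) (huv : G.Adj u v) :
    algConn (subdivideOne G u v) ≤ algConn G := by
  classical
  have hne : u ≠ v := huv.ne
  have hnt : Nontrivial V := ⟨u, v, hne⟩
  have hcardV : 2 ≤ Fintype.card V := Fintype.one_lt_card
  rw [aux_algConn_eq (subdivideOne G u v), aux_algConn_eq G]
  set L := G.lapMatrix ℝ with hLdef
  set L' := (subdivideOne G u v).lapMatrix ℝ with hL'def
  have hLpsd : L.PosSemidef := SimpleGraph.posSemidef_lapMatrix ℝ G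
  have hL'psd : L'.PosSemidef := SimpleGraph.posSemidef_lapMatrix ℝ (subdivideOne G u v)
  set μ := eigval L 2 with hμdef
  have hμ0 : 0 ≤ μ := aux_eigval_nonneg hLpsd 2
  have honeker : L' *ᵥ (fun _ => (1:ℝ)) = 0 :=
    SimpleGraph.lapMatrix_mulVec_const_eq_zero (subdivideOne G u v)
  have honekerG : L *ᵥ (fun _ => (1:ℝ)) = 0 :=
    SimpleGraph.lapMatrix_mulVec_const_eq_zero G
  have hone0 : (fun _ : V ⊕ Unit => (1:ℝ)) ≠ 0 := by
    intro h
    have h1 := congrFun h (Sum.inr ())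
    simp at h1
  set N := ((Fintype.card (V ⊕ Unit) : ℕ) : ℝ) with hNdef
  have hN1 : (1:ℝ) ≤ N := by
    have h1 : 0 < Fintype.card (V ⊕ Unit) := Fintype.card_pos
    have h2 : (1:ℕ) ≤ Fintype.card (V ⊕ Unit) := h1
    rw [hNdef]
    exact_mod_cast h2
  have hN0 : N ≠ 0 := by linarith
  -- the common construction
  have hkey : ∀ g : V → ℝ, ∃ x : V ⊕ Unit → ℝ,
      ((fun _ => (1:ℝ)) ⬝ᵥ x = 0) ∧ (x ⬝ᵥ (L' *ᵥ x) = g ⬝ᵥ (L *ᵥ g)) ∧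
      (x = fun p => Sum.elim g (fun _ : Unit => g u) p
        - (∑ q, Sum.elim g (fun _ : Unit => g u) q) / N) := by
    intro g
    set y := Sum.elim g (fun _ : Unit => g u) with hydef
    set mean := (∑ q, y q) / N with hmeandef
    refine ⟨fun p => y p - mean, ?_, ?_, rfl⟩
    · show (∑ p, 1 * (y p - mean)) = 0
      simp only [one_mul]
      rw [Finset.sum_sub_distrib, Finset.sum_const, Finset.card_univ, nsmul_eq_mul]
      rw [hmeandef, ← hNdef]
      field_simp
      ring
    · rw [hL'def, aux_quad_center (subdivideOne G u v) y mean,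
        aux_quad_subdiv G u v hne huv g, ← hLdef]
  rcases eq_or_lt_of_le hμ0 with hμz | hμpos
  · -- μ = 0
    obtain ⟨g, hgk, hgnc⟩ := aux_exists_nonconst_ker hLpsd hcardV hμz.symm
    obtain ⟨x, hx1, hx2, hxdef⟩ := hkey g
    have hxq : x ⬝ᵥ (L' *ᵥ x) = 0 := by rw [hx2, hgk]; simp
    have hray := aux_rayleigh_two hL'psd honeker hone0 hx1
    rw [hxq] at hray
    have hxne : x ≠ 0 := by
      intro h0
      apply hgnc
      refine ⟨(∑ q, Sum.elim g (fun _ : Unit => g u) q) / N, ?_⟩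
      funext a
      rw [hxdef] at h0
      have h0a := congrFun h0 (Sum.inl a)
      simp only [Sum.elim_inl, Pi.zero_apply] at h0a
      linarith
    have hxx : 0 < x ⬝ᵥ x :=
      lt_of_le_of_ne (aux_dot_self_nonneg x)
        (Ne.symm fun h => hxne (dotProduct_self_eq_zero.mp h))
    rw [← hμz]
    nlinarith [hray, hxx]
  · -- 0 < μ
    obtain ⟨g, hgL, hgn⟩ := aux_exists_eigvec hLpsd.1 hcardV
    rw [← hμdef] at hgL
    have hgsum : ∑ a, g a = 0 := by
      have h1 : (fun _ => (1:ℝ)) ⬝ᵥ (L *ᵥ g) = 0 := by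
        rw [Matrix.dotProduct_mulVec, ← Matrix.mulVec_transpose,
          (SimpleGraph.isSymm_lapMatrix (G := G) ℝ).eq, ← hLdef, honekerG]
        simp
      rw [hgL, dotProduct_smul, smul_eq_mul] at h1
      have h2 : (fun _ => (1:ℝ)) ⬝ᵥ g = ∑ a, g a := by simp [dotProduct]
      rw [h2] at h1
      rcases mul_eq_zero.mp h1 with h | h
      · exact absurd h (ne_of_gt hμpos)
      · exact h
    obtain ⟨x, hx1, hx2, hxdef⟩ := hkey g
    have hxq : x ⬝ᵥ (L' *ᵥ x) = μ := by
      rw [hx2, hgL, dotProduct_smul, smul_eq_mul, hgn, mul_one]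
    set y := Sum.elim g (fun _ : Unit => g u) with hydef
    set m := g u with hmdef
    have hsy : ∑ q, y q = m := by
      rw [hydef, Fintype.sum_sum_type]
      simp [hgsum]
    have hsy2 : ∑ q, (y q)^2 = 1 + m^2 := by
      rw [hydef, Fintype.sum_sum_type]
      have hgg : ∑ a, (g a)^2 = 1 := by
        rw [← hgn]
        exact Finset.sum_congr rfl fun a _ => sq (g a)
      simp [hgg]
    have hxxval : x ⬝ᵥ x = 1 + m^2 - 2*(m/N)*m + N*(m/N)^2 := by
      rw [hxdef]
      show (∑ p, (y p - (∑ q, y q)/N) * (y p - (∑ q, y q)/N)) = _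
      rw [hsy]
      have expand : ∀ p, (y p - m/N) * (y p - m/N)
          = (y p)^2 - 2*(m/N)*(y p) + (m/N)^2 := fun p => by ring
      rw [Finset.sum_congr rfl (fun p _ => expand p)]
      rw [Finset.sum_add_distrib, Finset.sum_sub_distrib, ← Finset.mul_sum,
        Finset.sum_const, Finset.card_univ, nsmul_eq_mul, hsy, hsy2, ← hNdef]
    have hxx1 : 1 ≤ x ⬝ᵥ x := by
      rw [hxxval]
      have h2 : m^2 = N^2 * (m/N)^2 := by
        field_simp
      have h3 : (m/N)*m = N*(m/N)^2 := by
        field_simp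
      nlinarith [h2, h3, mul_nonneg (mul_nonneg
        (le_trans zero_le_one hN1) (by linarith : (0:ℝ) ≤ N - 1)) (sq_nonneg (m/N))]
    have hray := aux_rayleigh_two hL'psd honeker hone0 hx1
    rw [hxq] at hray
    have he0 : 0 ≤ eigval L' 2 := aux_eigval_nonneg hL'psd 2
    nlinarith [hray, hxx1, he0]
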